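/- (Lemma 2, second part: exact coverage rate of the two-step confidence interval.) Fix an integer n ≥ 1, σ > 0, λ > 0, α, τ ∈ (0,1) and θ > 0, set ν_1 = z_{τ/2}σ/√n and ν_2 = √λ + z_{α/2}σ/√n (so ν_1 < ν_2), and let μ = N(θ, σ²/n). Then μ( {x : |x − θ| < z_{α/2}σ̃(θ)/√n and |x| ≥ ν_2} ∪ {x : |x − θ| < z_{α/2}σ/√n and ν_1 < |x| < ν_2} ) / μ({x : |x| > ν_1}) = (CR_b(θ, ν_1) + CR_a(θ, ν_2) − CR_b(θ, ν_2)) / P_s(θ, ν_1); that is, the conditional coverage probability CR(θ) of the two-step 100(1−α)% confidence interval, given that θ is selected by the two-step procedure, equals (CR_b(θ,ν_1) + CR_a(θ,ν_2) − CR_b(θ,ν_2))/P_s(θ,ν_1). -/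

import Mathlib

open MeasureTheory ProbabilityTheory

/-- The standard normal cumulative distribution function. -/
noncomputable def Phi (x : ℝ) : ℝ := (gaussianReal 0 1 (Set.Iic x)).toReal

/-- P_s(θ,ν) = Φ(√n(θ − ν)/σ) + Φ(√n(−θ − ν)/σ). -/
noncomputable def Ps (n : ℕ) (σ θ ν : ℝ) : ℝ :=
  Phi (Real.sqrt n * (θ - ν) / σ) + Phi (Real.sqrt n * (-θ - ν) / σ)

/-- σ̃(θ) = (1 + λ/θ²)⁻¹ σ for θ ≠ 0, with the convention σ̃(0) = 0. -/
noncomputable def sigTilde (lam σ θ : ℝ) : ℝ :=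
  if θ = 0 then 0 else (1 + lam / θ ^ 2)⁻¹ * σ

open Classical in
/-- The piecewise function CR_a(θ,ν); here `za` denotes the quantile z_{α/2}. -/
noncomputable def CRa (n : ℕ) (σ lam za θ ν : ℝ) : ℝ :=
  if θ < |ν - za * sigTilde lam σ θ / Real.sqrt n| then
    (Ps n σ θ ν - 2 * Phi (-(za * sigTilde lam σ θ / σ))) *
      (if ν < za * sigTilde lam σ θ / Real.sqrt n then 1 else 0)
  else if θ ≤ ν + za * sigTilde lam σ θ / Real.sqrt n then
    Phi (za * sigTilde lam σ θ / σ) - Phi (Real.sqrt n * (ν - θ) / σ)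
  else 1 - 2 * Phi (-(za * sigTilde lam σ θ / σ))

open Classical in
/-- The piecewise function CR_b(θ,ν); here `za` denotes the quantile z_{α/2}. -/
noncomputable def CRb (n : ℕ) (σ α za θ ν : ℝ) : ℝ :=
  if θ < |ν - za * σ / Real.sqrt n| then
    (Ps n σ θ ν - α) * (if ν < za * σ / Real.sqrt n then 1 else 0)
  else if θ ≤ ν + za * σ / Real.sqrt n then
    1 - α / 2 - Phi (Real.sqrt n * (ν - θ) / σ)
  else 1 - α

open Set
open scoped NNReal

/-! Under `N(θ, s²)` the event `{|x - θ| < ρ, ν < |x|}` is the disjoint union of the intervals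
`(max (θ - ρ) ν, θ + ρ)` and `(θ - ρ, min (θ + ρ) (-ν))`, so its probability is a sum of
differences of values of `Φ`; ordering the endpoints in the regimes `θ < |ν - ρ|`, `θ ≤ ν + ρ`, `ν + ρ < θ` yields
the piecewise formulas `CR_b` (half-width `ρ = z_{α/2} σ / √n`) and `CR_a`
(`ρ = z_{α/2} σ̃(θ) / √n`). The selected coverage event is the `CR_a` event at `ν₂` together with
the difference of the `CR_b` events at `ν₁` and `ν₂`; the boundary `|x| = ν₂` is null, and the
selection event `ν₁ < |x|` has probability `P_s(θ, ν₁)`. -/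

lemma Phi_eq_cdf : Phi = cdf (gaussianReal 0 1) := funext fun x ↦ (cdf_eq_real _ x).symm

lemma Phi_neg (x : ℝ) : Phi (-x) = 1 - Phi x := by
  have := nullSingletonClass_gaussianReal (μ := 0) one_ne_zero
  have hpre : (fun y : ℝ ↦ -y) ⁻¹' Iic (-x) = (Iio x)ᶜ := by ext; simp
  rw [Phi, ← measureReal_def, ← neg_zero, ← gaussianReal_map_neg,
    map_measureReal_apply measurable_neg measurableSet_Iic, hpre,
    probReal_compl_eq_one_sub measurableSet_Iio, measureReal_congr Iio_ae_eq_Iic,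
    measureReal_def, Phi]

lemma Phi_zero : Phi 0 = 1 / 2 := by
  linarith [neg_zero (G := ℝ) ▸ Phi_neg 0]

lemma pos_of_Phi_neg_lt_half {z : ℝ} (h : Phi (-z) < 1 / 2) : 0 < z := by
  by_contra! hz
  have := Phi_eq_cdf ▸ monotone_cdf (gaussianReal 0 1) (neg_nonneg.mpr hz)
  linarith [Phi_zero]

lemma gaussianReal_real_Iic (m : ℝ) {v : ℝ≥0} (hv : v ≠ 0) (x : ℝ) :
    (gaussianReal m v).real (Iic x) = Phi ((x - m) / √(v : ℝ)) := by
  have hs : 0 < √(v : ℝ) := Real.sqrt_pos.mpr (by positivity)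
  have hmap : ((gaussianReal 0 1).map (√(v : ℝ) * ·)).map (· + m) = gaussianReal m v := by
    rw [gaussianReal_map_const_mul, gaussianReal_map_add_const]
    congr 1
    · simp
    · ext; simp [Real.sq_sqrt v.coe_nonneg]
  have hpre : (√(v : ℝ) * ·) ⁻¹' ((· + m) ⁻¹' Iic x) = Iic ((x - m) / √(v : ℝ)) := by
    ext y; simp [le_div_iff₀ hs, le_sub_iff_add_le, mul_comm]
  rw [← hmap, map_measureReal_apply (measurable_add_const m) measurableSet_Iic,
    map_measureReal_apply (measurable_const_mul _) (measurableSet_Iic.preimage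
      (measurable_add_const m)), hpre, Phi, measureReal_def]

lemma setOf_abs_sub_lt_and_lt_abs (θ ρ ν : ℝ) :
    {x | |x - θ| < ρ ∧ ν < |x|} =
      Ioo (max (θ - ρ) ν) (θ + ρ) ∪ Ioo (θ - ρ) (min (θ + ρ) (-ν)) := by
  ext x
  simp only [mem_ofPred_eq, abs_sub_lt_iff, lt_abs, mem_union, mem_Ioo, max_lt_iff, lt_min_iff]
  constructor
  · rintro ⟨⟨h1, h2⟩, h | h⟩
    · left; exact ⟨⟨by linarith, h⟩, by linarith⟩
    · right; exact ⟨by linarith, by linarith, by linarith⟩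
  · rintro (⟨⟨h1, h2⟩, h3⟩ | ⟨h1, h2, h3⟩)
    · exact ⟨⟨by linarith, by linarith⟩, Or.inl h2⟩
    · exact ⟨⟨by linarith, by linarith⟩, Or.inr (by linarith)⟩

section NullSingleton

variable {μ : Measure ℝ} [NullSingletonClass μ]

lemma ae_abs_ne (ν : ℝ) : ∀ᵐ x ∂μ, |x| ≠ ν := by
  refine ae_iff.mpr (measure_mono_null (fun x hx ↦ ?_) ((toFinite {ν, -ν}).measure_zero μ))
  simpa using eq_or_eq_neg_of_abs_eq (not_not.mp hx)

lemma setOf_and_le_abs_ae_eq (p : ℝ → Prop) (ν : ℝ) :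
    {x | p x ∧ ν ≤ |x|} =ᵐ[μ] {x | p x ∧ ν < |x|} := by
  filter_upwards [ae_abs_ne ν] with x hx
  change (p x ∧ ν ≤ |x|) = (p x ∧ ν < |x|)
  rw [hx.symm.le_iff_lt]

variable [IsProbabilityMeasure μ]

lemma measureReal_Ioo_eq_sub (a b : ℝ) :
    μ.real (Ioo a b) = μ.real (Iic b) - μ.real (Iic (min a b)) := by
  rcases le_total a b with hab | hba
  · rw [min_eq_left hab, measureReal_congr Ioo_ae_eq_Ioc, ← Iic_sdiff_Iic,
      measureReal_sdiff (Iic_subset_Iic.mpr hab) measurableSet_Iic]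
  · rw [min_eq_right hba, Ioo_eq_empty_of_le hba, measureReal_empty, sub_self]

lemma measureReal_lt_abs {ν : ℝ} (hν : 0 ≤ ν) :
    μ.real {x | ν < |x|} = μ.real (Iic (-ν)) + (1 - μ.real (Iic ν)) := by
  have hsplit : {x | ν < |x|} = Iio (-ν) ∪ Ioi ν := by
    ext x; simp only [mem_ofPred_eq, lt_abs, mem_union, mem_Iio, mem_Ioi, lt_neg]; tauto
  rw [hsplit, measureReal_union (Iio_disjoint_Ioi_of_le (by linarith)) measurableSet_Ioi,
    measureReal_congr Iio_ae_eq_Iic, ← compl_Iic, probReal_compl_eq_one_sub measurableSet_Iic]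

lemma measureReal_abs_sub_lt_and_lt_abs (θ ρ : ℝ) {ν : ℝ} (hν : 0 ≤ ν) :
    μ.real {x | |x - θ| < ρ ∧ ν < |x|} =
      (μ.real (Iic (θ + ρ)) - μ.real (Iic (min (max (θ - ρ) ν) (θ + ρ)))) +
        (μ.real (Iic (min (θ + ρ) (-ν))) -
          μ.real (Iic (min (θ - ρ) (min (θ + ρ) (-ν))))) := by
  have hdisj : Disjoint (Ioo (max (θ - ρ) ν) (θ + ρ)) (Ioo (θ - ρ) (min (θ + ρ) (-ν))) := by
    refine disjoint_left.mpr fun x hx hx' ↦ ?_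
    linarith [le_max_right (θ - ρ) ν, min_le_right (θ + ρ) (-ν), hx.1, hx'.2]
  rw [setOf_abs_sub_lt_and_lt_abs, measureReal_union hdisj measurableSet_Ioo,
    measureReal_Ioo_eq_sub, measureReal_Ioo_eq_sub]

lemma measureReal_twoStep_coverage_eq {θ ρ r ν₁ ν₂ : ℝ} (hν : ν₁ < ν₂) :
    μ.real ({x | |x - θ| < ρ ∧ ν₂ ≤ |x|} ∪ {x | |x - θ| < r ∧ ν₁ < |x| ∧ |x| < ν₂}) =
      μ.real {x | |x - θ| < ρ ∧ ν₂ < |x|} +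
        (μ.real {x | |x - θ| < r ∧ ν₁ < |x|} - μ.real {x | |x - θ| < r ∧ ν₂ < |x|}) := by
  have hsplit : {x | |x - θ| < r ∧ ν₁ < |x| ∧ |x| < ν₂} =
      {x | |x - θ| < r ∧ ν₁ < |x|} \ {x | |x - θ| < r ∧ ν₂ ≤ |x|} := by
    ext x; simp only [mem_ofPred_eq, mem_sdiff, not_and, not_le]; tauto
  have hsub : {x | |x - θ| < r ∧ ν₂ ≤ |x|} ⊆ {x | |x - θ| < r ∧ ν₁ < |x|} :=
    fun x hx ↦ ⟨hx.1, hν.trans_le hx.2⟩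
  have hdisj : Disjoint {x | |x - θ| < ρ ∧ ν₂ ≤ |x|} {x | |x - θ| < r ∧ ν₁ < |x| ∧ |x| < ν₂} :=
    disjoint_left.mpr fun x hx hx' ↦ (hx.2.trans_lt hx'.2.2).false
  rw [measureReal_union hdisj (by measurability), hsplit,
    measureReal_sdiff hsub (by measurability), measureReal_congr (setOf_and_le_abs_ae_eq _ _),
    measureReal_congr (setOf_and_le_abs_ae_eq _ _)]

end NullSingleton

/-- The common shape of `CR_a` and `CR_b`, where `s = σ / √n` is the standard deviation of the
estimate and `ρ` the half-width of the interval. -/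
noncomputable def crPiecewise (s θ ν ρ : ℝ) : ℝ :=
  if θ < |ν - ρ| then
    (Phi ((θ - ν) / s) + Phi ((-θ - ν) / s) - 2 * Phi (-(ρ / s))) * (if ν < ρ then 1 else 0)
  else if θ ≤ ν + ρ then Phi (ρ / s) - Phi ((ν - θ) / s)
  else 1 - 2 * Phi (-(ρ / s))

lemma gaussianReal_real_abs_sub_lt_and_lt_abs {v : ℝ≥0} (hv : v ≠ 0) {θ ρ ν : ℝ}
    (hθ : 0 < θ) (hρ : 0 < ρ) (hν : 0 ≤ ν) :
    (gaussianReal θ v).real {x | |x - θ| < ρ ∧ ν < |x|} = crPiecewise √(v : ℝ) θ ν ρ := by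
  have := nullSingletonClass_gaussianReal (μ := θ) hv
  set s := √(v : ℝ)
  have hρs : Phi (ρ / s) = 1 - Phi (-(ρ / s)) := by rw [Phi_neg, sub_sub_cancel]
  have hνs : Phi ((θ - ν) / s) = 1 - Phi ((ν - θ) / s) := by rw [← Phi_neg, ← neg_div, neg_sub]
  rw [measureReal_abs_sub_lt_and_lt_abs θ ρ hν, crPiecewise]
  simp only [gaussianReal_real_Iic θ hv, add_sub_cancel_left]
  split_ifs with hsmall hνρ hmid
  · have : θ < ρ - ν := by
      rcases lt_abs.mp hsmall with h | h <;> linarith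
    rw [max_eq_right (by linarith), min_eq_left (by linarith), min_eq_right (by linarith),
      min_eq_left (by linarith), sub_sub_cancel_left, neg_div, hνs, hρs, neg_sub_comm]
    ring
  · have : θ < ν - ρ := by
      rcases lt_abs.mp hsmall with h | h <;> linarith
    rw [max_eq_right (by linarith), min_eq_right (by linarith), min_eq_right (by linarith),
      min_eq_right (by linarith), add_sub_cancel_left]
    ring
  · have := abs_le.mp (not_lt.mp hsmall)
    rw [max_eq_right (by linarith), min_eq_left (by linarith), min_eq_right (by linarith),
      min_eq_right (by linarith), hρs]
    ring
  · rw [max_eq_left (by linarith), min_eq_left (by linarith), min_eq_right (by linarith),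
      min_eq_right (by linarith), sub_sub_cancel_left, neg_div, hρs]
    ring

lemma gaussianReal_real_lt_abs {v : ℝ≥0} (hv : v ≠ 0) (θ : ℝ) {ν : ℝ} (hν : 0 ≤ ν) :
    (gaussianReal θ v).real {x | ν < |x|} =
      Phi ((θ - ν) / √(v : ℝ)) + Phi ((-θ - ν) / √(v : ℝ)) := by
  have := nullSingletonClass_gaussianReal (μ := θ) hv
  rw [measureReal_lt_abs hν, gaussianReal_real_Iic θ hv, gaussianReal_real_Iic θ hv,
    ← Phi_neg, ← neg_div, neg_sub, neg_sub_comm]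
  ring

lemma Ps_eq (n : ℕ) (σ θ ν : ℝ) :
    Ps n σ θ ν = Phi ((θ - ν) / (σ / √n)) + Phi ((-θ - ν) / (σ / √n)) := by
  rw [Ps, div_div_eq_mul_div, div_div_eq_mul_div, mul_comm (θ - ν), mul_comm (-θ - ν)]

lemma CRb_eq_crPiecewise {n : ℕ} (hn : n ≠ 0) {σ α za : ℝ} (hσ : σ ≠ 0)
    (hza : Phi (-za) = α / 2) (θ ν : ℝ) :
    CRb n σ α za θ ν = crPiecewise (σ / √n) θ ν (za * σ / √n) := by
  have hsn : √(n : ℝ) ≠ 0 := by positivity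
  have hz : za * σ / √n / (σ / √n) = za := by field_simp
  have hphi : Phi za = 1 - α / 2 := by rw [← hza, Phi_neg, sub_sub_cancel]
  rw [CRb, crPiecewise, hz, hza, hphi, ← Ps_eq, div_div_eq_mul_div, mul_comm (ν - θ),
    mul_div_cancel₀ α two_ne_zero]

lemma CRa_eq_crPiecewise {n : ℕ} (hn : n ≠ 0) (σ lam za θ ν : ℝ) :
    CRa n σ lam za θ ν = crPiecewise (σ / √n) θ ν (za * sigTilde lam σ θ / √n) := by
  have hsn : √(n : ℝ) ≠ 0 := by positivity
  have hz : za * sigTilde lam σ θ / √n / (σ / √n) = za * sigTilde lam σ θ / σ := by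
    field_simp
  rw [CRa, crPiecewise, hz, ← Ps_eq, div_div_eq_mul_div, mul_comm (ν - θ)]

/-- Lemma 2, second part: the conditional coverage probability of the
two-step confidence interval, given selection by the two-step procedure
(|x| > ν₁ = z_{τ/2}σ/√n), equals
(CR_b(θ,ν₁) + CR_a(θ,ν₂) − CR_b(θ,ν₂))/P_s(θ,ν₁), where ν₂ = √λ + z_{α/2}σ/√n. -/
theorem CR_eq_conditional_coverage (n : ℕ) (hn : 1 ≤ n) (σ lam α τ za zt θ : ℝ)
    (hσ : 0 < σ) (hlam : 0 < lam)
    (hα : α ∈ Set.Ioo (0:ℝ) 1) (hτ : τ ∈ Set.Ioo (0:ℝ) 1)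
    (hza : Phi (-za) = α / 2) (hzt : Phi (-zt) = τ / 2) (hθ : 0 < θ)
    (hν12 : zt * σ / Real.sqrt n < Real.sqrt lam + za * σ / Real.sqrt n) :
    ((gaussianReal θ (Real.toNNReal (σ^2 / n)))
        ({x : ℝ | |x - θ| < za * sigTilde lam σ θ / Real.sqrt n ∧
            Real.sqrt lam + za * σ / Real.sqrt n ≤ |x|}
          ∪ {x : ℝ | |x - θ| < za * σ / Real.sqrt n ∧
              zt * σ / Real.sqrt n < |x| ∧
              |x| < Real.sqrt lam + za * σ / Real.sqrt n})).toReal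
      / ((gaussianReal θ (Real.toNNReal (σ^2 / n)))
          {x : ℝ | zt * σ / Real.sqrt n < |x|}).toReal
      = (CRb n σ α za θ (zt * σ / Real.sqrt n)
          + CRa n σ lam za θ (Real.sqrt lam + za * σ / Real.sqrt n)
          - CRb n σ α za θ (Real.sqrt lam + za * σ / Real.sqrt n))
        / Ps n σ θ (zt * σ / Real.sqrt n) := by
  have hn0 : n ≠ 0 := by omega
  set v := Real.toNNReal (σ ^ 2 / n)
  have hv : v ≠ 0 := (Real.toNNReal_pos.mpr (by positivity)).ne'
  have hsv : √(v : ℝ) = σ / √n := by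
    rw [Real.coe_toNNReal _ (by positivity), Real.sqrt_div' _ (Nat.cast_nonneg n),
      Real.sqrt_sq hσ.le]
  have hza0 : 0 < za := pos_of_Phi_neg_lt_half (by linarith [hα.2])
  have hzt0 : 0 < zt := pos_of_Phi_neg_lt_half (by linarith [hτ.2])
  have hsig : 0 < sigTilde lam σ θ := by
    rw [sigTilde, if_neg hθ.ne']
    positivity
  have hcov : ∀ ν ρ, 0 ≤ ν → 0 < ρ → (gaussianReal θ v).real {x | |x - θ| < ρ ∧ ν < |x|} =
      crPiecewise (σ / √n) θ ν ρ := fun ν ρ hν hρ ↦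
    hsv ▸ gaussianReal_real_abs_sub_lt_and_lt_abs hv hθ hρ hν
  have := nullSingletonClass_gaussianReal (μ := θ) hv
  have hν₁ : 0 ≤ zt * σ / √n := by positivity
  have hν₂ : 0 ≤ √lam + za * σ / √n := by positivity
  rw [← measureReal_def, ← measureReal_def, measureReal_twoStep_coverage_eq hν12,
    hcov _ _ hν₂ (by positivity), hcov _ _ hν₁ (by positivity), hcov _ _ hν₂ (by positivity),
    gaussianReal_real_lt_abs hv θ hν₁, hsv, ← Ps_eq,
    CRb_eq_crPiecewise hn0 hσ.ne' hza, CRb_eq_crPiecewise hn0 hσ.ne' hza, CRa_eq_crPiecewise hn0]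
  ring
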